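/- arXiv:1905.07428 — 3 statements merged into one kernel-verified Lean document; each statement's English description precedes it below -/
import Mathlib

section
/- If (x*, α*) is an optimal solution of the Pascoletti-Serafini scalarization min{α : x ∈ X, z(x) ≤ s + α·d} with s ∈ ℝ² and d ∈ ℝ²₊ \ {0}, then the point y* = s + α*·d agrees with z(x*) in at least one component, i.e., z(x*)₁ = y*₁ or z(x*)₂ = y*₂. -/
/-! If `z(x*)` were strictly below `s + α* d` in both components, both strict inequalities would
persist for all `α` near `α*`, in particular for some `α < α*`, and `(x*, α)` would be a feasible
point with a smaller value. -/

open Filter Topology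

lemma eventually_lt_add_mul_nhds {y s d α : ℝ} (h : y < s + α * d) :
    ∀ᶠ β in 𝓝 α, y < s + β * d :=
  (continuous_const.add (continuous_id.mul continuous_const)).continuousAt.eventually_const_lt h

theorem ps_one_common_component_general {X : Type*} (z : X → ℝ × ℝ)
    (s d : ℝ × ℝ)
    (xstar : X) (αstar : ℝ)
    (hfeas : (z xstar).1 ≤ s.1 + αstar * d.1 ∧ (z xstar).2 ≤ s.2 + αstar * d.2)
    (hopt : ∀ (x : X) (α : ℝ),
      (z x).1 ≤ s.1 + α * d.1 ∧ (z x).2 ≤ s.2 + α * d.2 → αstar ≤ α) :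
    (z xstar).1 = s.1 + αstar * d.1 ∨ (z xstar).2 = s.2 + αstar * d.2 := by
  by_contra! h
  have slack₁ := eventually_lt_add_mul_nhds (hfeas.1.lt_of_ne h.1)
  have slack₂ := eventually_lt_add_mul_nhds (hfeas.2.lt_of_ne h.2)
  obtain ⟨α, hα, h₁, h₂⟩ := (slack₁.and slack₂).exists_lt
  exact hα.not_ge (hopt xstar α ⟨h₁.le, h₂.le⟩)

/-- Pascoletti–Serafini scalarization: at an optimal solution, `y* = s + α* d`
agrees with `z(x*)` in at least one component. -/
theorem ps_one_common_component {X : Type*} [Nonempty X] (z : X → ℝ × ℝ)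
    (s d : ℝ × ℝ) (hd1 : 0 ≤ d.1) (hd2 : 0 ≤ d.2) (hd : d ≠ 0)
    (xstar : X) (αstar : ℝ)
    (hfeas : (z xstar).1 ≤ s.1 + αstar * d.1 ∧ (z xstar).2 ≤ s.2 + αstar * d.2)
    (hopt : ∀ (x : X) (α : ℝ),
      (z x).1 ≤ s.1 + α * d.1 ∧ (z x).2 ≤ s.2 + α * d.2 → αstar ≤ α) :
    (z xstar).1 = s.1 + αstar * d.1 ∨ (z xstar).2 = s.2 + αstar * d.2 :=
  ps_one_common_component_general z s d xstar αstar hfeas hopt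
end

section
/- Given integers N ≥ 2, C, C₂ with 0 ≤ C₂ ≤ C ≤ N − 2 − C₂, the quantity 3N + C − 3C₂ − 1 satisfies 2N + 1 ≤ 3N + C − 3C₂ − 1 ≤ 4N − 3. Moreover the upper bound is attained at C₂ = 0, C = N−2, and when N is even the lower bound is attained at C = C₂ = (N−2)/2. -/
theorem algorithm1_bounds_general (N C C2 : ℤ)
    (h0 : 0 ≤ C2) (hC2C : C2 ≤ C) (hCN : C ≤ N - 2 - C2) :
    (2 * N + 1 ≤ 3 * N + C - 3 * C2 - 1 ∧ 3 * N + C - 3 * C2 - 1 ≤ 4 * N - 3) ∧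
    (3 * N + (N - 2) - 3 * 0 - 1 = 4 * N - 3) ∧
    (∀ C' : ℤ, 2 * C' = N - 2 → 3 * N + C' - 3 * C' - 1 = 2 * N + 1) :=
  ⟨⟨by linarith, by linarith⟩, by ring, fun _ hC' => by linarith⟩

/-- Bounds on the number of mixed integer programs solved by Algorithm 1:
`2N + 1 ≤ 3N + C − 3C₂ − 1 ≤ 4N − 3`, the upper bound being attained at
`C₂ = 0, C = N − 2`, and (for even `N`) the lower bound at
`C = C₂ = (N − 2)/2`. -/
theorem algorithm1_bounds (N C C2 : ℤ)
    (hN : 2 ≤ N) (h0 : 0 ≤ C2) (hC2C : C2 ≤ C) (hCN : C ≤ N - 2 - C2) :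
    (2 * N + 1 ≤ 3 * N + C - 3 * C2 - 1 ∧ 3 * N + C - 3 * C2 - 1 ≤ 4 * N - 3) ∧
    (3 * N + (N - 2) - 3 * 0 - 1 = 4 * N - 3) ∧
    (∀ C' : ℤ, 2 * C' = N - 2 → 3 * N + C' - 3 * C' - 1 = 2 * N + 1) :=
  algorithm1_bounds_general N C C2 h0 hC2C hCN
end

section
/- Let (α^b, x^b) be an optimal solution of the Pascoletti-Serafini scalarization over a box with reference point s^b and direction d ≥ 0, d ≠ 0. Then the half-open region R = {y ∈ ℝ² : s^b ≤ y and y < s^b + α^b·d componentwise} contains no feasible objective vector z(x̃) for x̃ satisfying the box constraints; in particular, R contains no nondominated point of the restricted problem. -/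
/-! Both components of `z x̃` lie strictly below `s + α^b d`, and strict inequalities survive a
small decrease of `α^b`; the resulting `α̃ < α^b` is feasible for the scalarization together
with `x̃`, contradicting the optimality of `α^b`. -/

open Filter Topology

lemma eventually_lt_add_mul_nhds_s9 {a b c t : ℝ} (h : a < b + t * c) :
    ∀ᶠ t' in 𝓝 t, a < b + t' * c :=
  ((continuous_const.add (continuous_id.mul continuous_const)).tendsto t).eventually_const_lt h

theorem ps_box_empty_region_general {X : Type*} (z : X → ℝ × ℝ)
    (s d : ℝ × ℝ)
    (p1 t2 ε : ℝ)
    (αb : ℝ)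
    (hopt : ∀ (x : X) (α : ℝ),
      ((z x).1 ≤ s.1 + α * d.1 ∧ (z x).2 ≤ s.2 + α * d.2) →
      (z x).1 ≤ p1 - ε → (z x).2 ≤ t2 - ε → αb ≤ α) :
    ¬ ∃ x : X, ((z x).1 ≤ p1 - ε ∧ (z x).2 ≤ t2 - ε) ∧
      (s.1 ≤ (z x).1 ∧ s.2 ≤ (z x).2) ∧
      ((z x).1 < s.1 + αb * d.1 ∧ (z x).2 < s.2 + αb * d.2) := by
  rintro ⟨x, ⟨hbox1, hbox2⟩, -, hlt1, hlt2⟩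
  obtain ⟨α, hα, hα1, hα2⟩ :=
    ((eventually_lt_add_mul_nhds_s9 hlt1).and (eventually_lt_add_mul_nhds_s9 hlt2)).exists_lt
  exact (hopt x α ⟨hα1.le, hα2.le⟩ hbox1 hbox2).not_gt hα

/-- The half-open region `R = {y : s^b ≤ y, y < s^b + α^b d}` contains no
feasible objective vector of the box-constrained problem, where `(α^b, x^b)` is
optimal for the box-restricted Pascoletti–Serafini scalarization. -/
theorem ps_box_empty_region {X : Type*} [Nonempty X] (z : X → ℝ × ℝ)
    (s d : ℝ × ℝ) (hd1 : 0 ≤ d.1) (hd2 : 0 ≤ d.2) (hd : d ≠ 0)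
    (p1 t2 ε : ℝ)
    (xb : X) (αb : ℝ)
    (hfeas : ((z xb).1 ≤ s.1 + αb * d.1 ∧ (z xb).2 ≤ s.2 + αb * d.2) ∧
             (z xb).1 ≤ p1 - ε ∧ (z xb).2 ≤ t2 - ε)
    (hopt : ∀ (x : X) (α : ℝ),
      ((z x).1 ≤ s.1 + α * d.1 ∧ (z x).2 ≤ s.2 + α * d.2) →
      (z x).1 ≤ p1 - ε → (z x).2 ≤ t2 - ε → αb ≤ α) :
    ¬ ∃ x : X, ((z x).1 ≤ p1 - ε ∧ (z x).2 ≤ t2 - ε) ∧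
      (s.1 ≤ (z x).1 ∧ s.2 ≤ (z x).2) ∧
      ((z x).1 < s.1 + αb * d.1 ∧ (z x).2 < s.2 + αb * d.2) :=
  ps_box_empty_region_general z s d p1 t2 ε αb hopt
end
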